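/- For every k ≥ 1 and all natural numbers v₁,…,v_k, w₁,…,w_k, z₁,…,z_k, the word α · L(v₁)⋯L(v_k) · L(w₁)⋯L(w_k) · α · R(w_k)⋯R(w₁) · γ · L(z₁)⋯L(z_k) · α · R(z_k)⋯R(z₁) · γ̄ · ᾱ · R(v_k)⋯R(v₁) · β belongs to L_APA, where for a natural number v we write L(v) = α^v α γ (v copies of α, then α, then γ) and R(v) = γ̄ ᾱ β^v (γ̄, then ᾱ, then v copies of β). -/

import Mathlib

/-- The alphabet Σ = {α, ᾱ, β, β̄, γ, γ̄}. -/
inductive APSym where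
  | al : APSym    -- α
  | alb : APSym   -- ᾱ
  | be : APSym    -- β
  | beb : APSym   -- β̄
  | ga : APSym    -- γ
  | gab : APSym   -- γ̄
deriving DecidableEq

/-- The involution swapping α ↔ ᾱ, β ↔ β̄, γ ↔ γ̄. -/
def APSym.bar : APSym → APSym
  | .al => .alb
  | .alb => .al
  | .be => .beb
  | .beb => .be
  | .ga => .gab
  | .gab => .ga

/-- `srev (x₁x₂⋯x_m) = bar(x_m)⋯bar(x₂)bar(x₁)`. -/
def srev (w : List APSym) : List APSym := (w.map APSym.bar).reverse

/-- The APA language: the least set of words with α ∈ L_APA, closed under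
`(u, v) ↦ u·v·β` and `(u, v) ↦ u·γ·rev(v)`. -/
inductive LAPA : List APSym → Prop
  | base : LAPA [APSym.al]
  | app {u v : List APSym} : LAPA u → LAPA v → LAPA (u ++ v ++ [APSym.be])
  | inv {u v : List APSym} : LAPA u → LAPA v → LAPA (u ++ [APSym.ga] ++ srev v)

/-- `L(v) = α^v α γ`. -/
def Lw (v : ℕ) : List APSym := List.replicate v APSym.al ++ [APSym.al, APSym.ga]

/-- `R(v) = γ̄ ᾱ β^v`. -/
def Rw (v : ℕ) : List APSym := [APSym.gab, APSym.alb] ++ List.replicate v APSym.be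

/-- `L(f 1)·L(f 2)⋯L(f k)`. -/
def catL {k : ℕ} (f : Fin k → ℕ) : List APSym :=
  (List.ofFn fun i : Fin k => Lw (f i)).flatten

/-- `R(f k)·R(f (k-1))⋯R(f 1)`. -/
def catR {k : ℕ} (f : Fin k → ℕ) : List APSym :=
  ((List.ofFn fun i : Fin k => Rw (f i)).reverse).flatten

/-! Since `rev (s·γ·rev r) = r·γ̄·rev s`, nesting the rule `T ← TγT̄` gives `u·γ·r·γ̄·rev s`
for words `u, r, s` of the language; with `u = s = α`, and padding by `αᵃ … βᵃ` through
`T ← TTβ`, every `L(a)·Y·R(a)` with `Y` in the language is in it again. The word of the theorem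
is `α · (catL v · (W·γ·Z·γ̄·ᾱ) · catR v) · β`, where `W` and `Z` are `α` wrapped by `w` and `z`. -/

lemma APSym.bar_involutive : Function.Involutive APSym.bar := by
  intro x
  cases x <;> rfl

lemma srev_append (a b : List APSym) : srev (a ++ b) = srev b ++ srev a := by
  simp [srev]

lemma srev_srev (a : List APSym) : srev (srev a) = a := by
  simp [srev, List.map_reverse, APSym.bar_involutive.comp_self]

lemma srev_singleton (x : APSym) : srev [x] = [x.bar] := rfl

namespace LAPA

lemma append_ga_append_gab_srev {u r s : List APSym} (hu : LAPA u) (hr : LAPA r)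
    (hs : LAPA s) : LAPA (u ++ [APSym.ga] ++ r ++ [APSym.gab] ++ srev s) := by
  have h := inv hu (inv hs hr)
  rwa [srev_append, srev_append, srev_srev, srev_singleton, APSym.bar, ← List.append_assoc,
    ← List.append_assoc] at h

lemma al_ga_append_gab_alb {Y : List APSym} (hY : LAPA Y) :
    LAPA ([APSym.al, APSym.ga] ++ Y ++ [APSym.gab, APSym.alb]) := by
  simpa [srev, APSym.bar] using append_ga_append_gab_srev base hY base

lemma replicate_al_append_replicate_be {Y : List APSym} (hY : LAPA Y) (n : ℕ) :
    LAPA (List.replicate n APSym.al ++ Y ++ List.replicate n APSym.be) := by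
  induction n with
  | zero => simpa using hY
  | succ n ih =>
    rw [List.replicate_succ, List.replicate_succ']
    simpa using app base ih

lemma Lw_append_Rw {Y : List APSym} (hY : LAPA Y) (a : ℕ) : LAPA (Lw a ++ Y ++ Rw a) := by
  simpa [Lw, Rw] using replicate_al_append_replicate_be (al_ga_append_gab_alb hY) a

end LAPA

lemma catL_succ {k : ℕ} (f : Fin (k + 1) → ℕ) : catL f = Lw (f 0) ++ catL (f ∘ Fin.succ) := by
  simp [catL, List.ofFn_succ]

lemma catR_succ {k : ℕ} (f : Fin (k + 1) → ℕ) : catR f = catR (f ∘ Fin.succ) ++ Rw (f 0) := by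
  simp [catR, List.ofFn_succ]

lemma LAPA.catL_append_catR {Y : List APSym} (hY : LAPA Y) {k : ℕ} (f : Fin k → ℕ) :
    LAPA (catL f ++ Y ++ catR f) := by
  induction k with
  | zero => simpa [catL, catR] using hY
  | succ k ih =>
    rw [catL_succ, catR_succ]
    simpa using Lw_append_Rw (ih (f ∘ Fin.succ)) (f 0)

theorem stmt14_general (k : ℕ) (v w z : Fin k → ℕ) :
    LAPA ([APSym.al] ++ catL v ++ catL w ++ [APSym.al] ++ catR w ++ [APSym.ga] ++
      catL z ++ [APSym.al] ++ catR z ++ [APSym.gab, APSym.alb] ++ catR v ++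
      [APSym.be]) := by
  have hw := LAPA.catL_append_catR LAPA.base w
  have hz := LAPA.catL_append_catR LAPA.base z
  have hwz := LAPA.append_ga_append_gab_srev hw hz LAPA.base
  have hv := LAPA.catL_append_catR hwz v
  simpa [srev, APSym.bar] using LAPA.app LAPA.base hv

/-- For every `k ≥ 1` and all naturals `v₁,…,v_k`, `w₁,…,w_k`, `z₁,…,z_k`, the word
`α · L(v₁)⋯L(v_k) · L(w₁)⋯L(w_k) · α · R(w_k)⋯R(w₁) · γ · L(z₁)⋯L(z_k) · α ·
R(z_k)⋯R(z₁) · γ̄ · ᾱ · R(v_k)⋯R(v₁) · β` belongs to L_APA. -/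
theorem stmt14 (k : ℕ) (hk : 1 ≤ k) (v w z : Fin k → ℕ) :
    LAPA ([APSym.al] ++ catL v ++ catL w ++ [APSym.al] ++ catR w ++ [APSym.ga] ++
      catL z ++ [APSym.al] ++ catR z ++ [APSym.gab, APSym.alb] ++ catR v ++
      [APSym.be]) :=
  stmt14_general k v w z
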